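/- Let (M, ⊣) be a monoid with identity e and M^{~1} = M ∪ {1̃} with the operation extended by 1̃ ⊣ 1̃ = e, 1̃ ⊣ m = m ⊣ 1̃ = m. If (M^{~1}, ⊢) is an interassociate of (M^{~1}, ⊣) with a := 1̃ ⊢ 1̃ ∈ M, then x ⊢ y = x ⊣ a ⊣ y for all x, y ∈ M^{~1}, i.e., (M^{~1}, ⊢) is the variant of (M^{~1}, ⊣) with sandwich element a. -/

import Mathlib

/-!
With `1̃` encoded as `none`, the operation `⊣` on `M ∪ {1̃}` is "replace `1̃` by `e`, then
multiply", so it is associative and `1̃` is a unit on `M`: `y = 1̃ ⊣ y` unless `y = 1̃`, and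
`x = x ⊣ 1̃` unless `x = 1̃`.
The two interassociativity laws move these copies of `1̃` out of `⊢`:
`1̃ ⊢ y = (1̃ ⊢ 1̃) ⊣ y = a ⊣ y` and `x ⊢ y = x ⊣ (1̃ ⊢ y)`, which together give `x ⊣ a ⊣ y`.
-/

namespace AlmostMonoid

variable {M : Type*} [Monoid M] {m h : Option M → Option M → Option M}

lemma mul_assoc (hm : ∀ p q, m p q = some (p.getD 1 * q.getD 1)) (x y z : Option M) :
    m (m x y) z = m x (m y z) := by
  simp only [hm, Option.getD_some, _root_.mul_assoc]

lemma some_mul_none (hm : ∀ p q, m p q = some (p.getD 1 * q.getD 1)) (u : M) :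
    m (some u) none = some u := by
  simp [hm]

lemma none_mul_some (hm : ∀ p q, m p q = some (p.getD 1 * q.getD 1)) (v : M) :
    m none (some v) = some v := by
  simp [hm]

lemma interassoc_none_left (hm : ∀ p q, m p q = some (p.getD 1 * q.getD 1))
    (inter : ∀ x y z, m (h x y) z = h x (m y z)) {a : M} (ha : h none none = some a)
    (y : Option M) : h none y = m (some a) y := by
  rcases y with _ | v
  · rw [ha, some_mul_none hm]
  · have h_none_some := inter none none (some v)
    rw [ha, none_mul_some hm] at h_none_some
    exact h_none_some.symm

lemma interassoc_some_left (hm : ∀ p q, m p q = some (p.getD 1 * q.getD 1))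
    (inter : ∀ x y z, h (m x y) z = m x (h y z)) (u : M) (y : Option M) :
    h (some u) y = m (some u) (h none y) := by
  have h_some_none := inter (some u) none y
  rwa [some_mul_none hm] at h_some_none

theorem eq_variant (hm : ∀ p q, m p q = some (p.getD 1 * q.getD 1))
    (inter1 : ∀ x y z, h (m x y) z = m x (h y z)) (inter2 : ∀ x y z, m (h x y) z = h x (m y z))
    {a : M} (ha : h none none = some a) (x y : Option M) : h x y = m (m x (some a)) y := by
  rcases x with _ | u
  · rw [interassoc_none_left hm inter2 ha, none_mul_some hm]
  · rw [interassoc_some_left hm inter1, interassoc_none_left hm inter2 ha, mul_assoc hm]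

end AlmostMonoid

theorem interassociate_of_almost_monoid_is_variant {M : Type*} [Monoid M]
    (h : Option M → Option M → Option M)
    (inter1 : ∀ x y z : Option M,
      h ((fun p q => match p, q with
            | some a, some b => some (a * b)
            | some a, none => some a
            | none, some b => some b
            | none, none => some 1) x y) z
        = (fun p q => match p, q with
            | some a, some b => some (a * b)
            | some a, none => some a
            | none, some b => some b
            | none, none => some 1) x (h y z))
    (inter2 : ∀ x y z : Option M,
      (fun p q => match p, q with
          | some a, some b => some (a * b)
          | some a, none => some a
          | none, some b => some b
          | none, none => some 1) (h x y) z
        = h x ((fun p q => match p, q with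
            | some a, some b => some (a * b)
            | some a, none => some a
            | none, some b => some b
            | none, none => some 1) y z))
    (a : M) (ha : h none none = some a) :
    ∀ x y : Option M,
      h x y = (fun p q => match p, q with
          | some u, some v => some (u * v)
          | some u, none => some u
          | none, some v => some v
          | none, none => some 1)
        ((fun p q => match p, q with
          | some u, some v => some (u * v)
          | some u, none => some u
          | none, some v => some v
          | none, none => some 1) x (some a)) y := by
  refine AlmostMonoid.eq_variant ?_ inter1 inter2 ha
  rintro (_ | u) (_ | v) <;> simp
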